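/- arXiv:2106.11381 — 2 statements merged into one kernel-verified Lean document; each statement's English description precedes it below -/
import Mathlib

section
/- Let 𝒯 : ℝ → ℝ^{n×n} be a family of orthogonal matrices (𝒯(p)ᵀ𝒯(p) = I_n for all p), let P ∈ ℝ^{n×n}, and suppose the derivative relation 𝒯'(p)φ = 𝒯(p)Pφ holds for all p ∈ ℝ and all φ ∈ ℝⁿ, where 𝒯'(p)φ denotes the derivative of p ↦ 𝒯(p)φ. Let A ∈ ℝ^{n×n} be equivariant with respect to the transformation, i.e., A𝒯(p) = 𝒯(p)A for all p. For a fixed mode matrix Φ ∈ ℝ^{n×r}, set V(p) := 𝒯(p)Φ and W(p) := 𝒯(p)PΦ. Then the reduced-order model coefficient matrices are independent of the path: M₁(p) := V(p)ᵀV(p) = ΦᵀΦ, N(p) := V(p)ᵀW(p) = ΦᵀPΦ, M₂(p) := W(p)ᵀW(p) = ΦᵀPᵀPΦ, Â₁(p) := V(p)ᵀAV(p) = ΦᵀAΦ, and Â₂(p) := W(p)ᵀAV(p) = ΦᵀPᵀAΦ, for all p ∈ ℝ. -/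
open Matrix

/-- For a family of orthogonal transformation matrices `𝒯(p)` satisfying the
derivative relation `𝒯'(p)φ = 𝒯(p)Pφ`, and a system matrix `A` equivariant with
respect to the transformation (`A𝒯(p) = 𝒯(p)A`), the reduced-order model
coefficient matrices `M₁, N, M₂, Â₁, Â₂` built from `V(p) = 𝒯(p)Φ` and
`W(p) = 𝒯(p)PΦ` are independent of the path variable `p`. -/
theorem rom_matrices_path_independent
    (n r : ℕ)
    (T : ℝ → Matrix (Fin n) (Fin n) ℝ)
    (horth : ∀ p : ℝ, (T p)ᵀ * T p = 1)
    (P A : Matrix (Fin n) (Fin n) ℝ)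
    (hderiv : ∀ (p : ℝ) (φ : Fin n → ℝ),
      HasDerivAt (fun s : ℝ => (T s).mulVec φ) ((T p).mulVec (P.mulVec φ)) p)
    (hequiv : ∀ p : ℝ, A * T p = T p * A)
    (Φ : Matrix (Fin n) (Fin r) ℝ) :
    ∀ p : ℝ,
      (T p * Φ)ᵀ * (T p * Φ) = Φᵀ * Φ ∧
      (T p * Φ)ᵀ * (T p * P * Φ) = Φᵀ * P * Φ ∧
      (T p * P * Φ)ᵀ * (T p * P * Φ) = Φᵀ * Pᵀ * P * Φ ∧
      (T p * Φ)ᵀ * (A * (T p * Φ)) = Φᵀ * A * Φ ∧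
      (T p * P * Φ)ᵀ * (A * (T p * Φ)) = Φᵀ * Pᵀ * A * Φ := by
  intro p
  have h := horth p
  have he := hequiv p
  refine ⟨?_, ?_, ?_, ?_, ?_⟩
  · calc (T p * Φ)ᵀ * (T p * Φ) = Φᵀ * ((T p)ᵀ * T p) * Φ := by
          simp [Matrix.transpose_mul, Matrix.mul_assoc]
    _ = Φᵀ * Φ := by rw [h]; simp
  · calc (T p * Φ)ᵀ * (T p * P * Φ) = Φᵀ * ((T p)ᵀ * T p) * (P * Φ) := by
          simp [Matrix.transpose_mul, Matrix.mul_assoc]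
    _ = Φᵀ * P * Φ := by rw [h]; simp [Matrix.mul_assoc]
  · calc (T p * P * Φ)ᵀ * (T p * P * Φ)
        = Φᵀ * Pᵀ * ((T p)ᵀ * T p) * (P * Φ) := by
          simp [Matrix.transpose_mul, Matrix.mul_assoc]
    _ = Φᵀ * Pᵀ * P * Φ := by rw [h]; simp [Matrix.mul_assoc]
  · calc (T p * Φ)ᵀ * (A * (T p * Φ))
        = Φᵀ * (T p)ᵀ * ((A * T p) * Φ) := by
          simp [Matrix.transpose_mul, Matrix.mul_assoc]
    _ = Φᵀ * (((T p)ᵀ * T p) * (A * Φ)) := by rw [he]; simp [Matrix.mul_assoc]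
    _ = Φᵀ * A * Φ := by rw [h]; simp [Matrix.mul_assoc]
  · calc (T p * P * Φ)ᵀ * (A * (T p * Φ))
        = Φᵀ * Pᵀ * (T p)ᵀ * ((A * T p) * Φ) := by
          simp [Matrix.transpose_mul, Matrix.mul_assoc]
    _ = Φᵀ * Pᵀ * (((T p)ᵀ * T p) * (A * Φ)) := by rw [he]; simp [Matrix.mul_assoc]
    _ = Φᵀ * Pᵀ * A * Φ := by rw [h]; simp [Matrix.mul_assoc]
end

section
/- Let 𝒯 : ℝ → ℝ^{n×n} satisfy 𝒯(p₁)ᵀ𝒯(p₂) = 𝒯(p₂ − p₁) for all p₁, p₂ ∈ ℝ, and let P ∈ ℝ^{n×n} be such that 𝒯'(p)φ = 𝒯(p)Pφ for all p ∈ ℝ and φ ∈ ℝⁿ, where 𝒯'(p)φ denotes the derivative of p ↦ 𝒯(p)φ. Then for all φ, ψ ∈ ℝⁿ and all p₁, p₂ ∈ ℝ: ⟨𝒯(p₁)φ, 𝒯(p₂)ψ⟩ = ⟨φ, 𝒯(p₂−p₁)ψ⟩, ⟨𝒯(p₁)φ, 𝒯'(p₂)ψ⟩ = ⟨φ, 𝒯(p₂−p₁)Pψ⟩,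 and ⟨𝒯'(p₁)φ, 𝒯'(p₂)ψ⟩ = ⟨Pφ, 𝒯(p₂−p₁)Pψ⟩. In particular, every entry of the path-dependent ROM matrices M₁(p) = V(p)ᵀV(p), N(p) = V(p)ᵀW(p), M₂(p) = W(p)ᵀW(p) depends on the pair of path components (p_ρ, p_σ) only through the difference p_σ − p_ρ, so it suffices to sample these matrices in a one-dimensional space. -/
open Matrix

lemma key_dot (n : ℕ) (A B : Matrix (Fin n) (Fin n) ℝ) (φ ψ : Fin n → ℝ) :
    A.mulVec φ ⬝ᵥ B.mulVec ψ = φ ⬝ᵥ (Aᵀ * B).mulVec ψ := by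
  rw [dotProduct_mulVec, dotProduct_mulVec, ← vecMul_vecMul, vecMul_transpose]

/-- If the transformation family satisfies `𝒯(p₁)ᵀ𝒯(p₂) = 𝒯(p₂ - p₁)` and the
derivative relation `𝒯'(p)φ = 𝒯(p)Pφ`, then all the Euclidean inner products
`⟨𝒯(p₁)φ, 𝒯(p₂)ψ⟩`, `⟨𝒯(p₁)φ, 𝒯'(p₂)ψ⟩`, `⟨𝒯'(p₁)φ, 𝒯'(p₂)ψ⟩` depend on
`(p₁, p₂)` only through the difference `p₂ - p₁`, so the path-dependent ROM
matrices `M₁, N, M₂` can be sampled in a one-dimensional space. -/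
theorem transformed_inner_products_depend_on_difference
    (n : ℕ)
    (T T' : ℝ → Matrix (Fin n) (Fin n) ℝ)
    (P : Matrix (Fin n) (Fin n) ℝ)
    (hgroup : ∀ p₁ p₂ : ℝ, (T p₁)ᵀ * T p₂ = T (p₂ - p₁))
    (hderiv : ∀ (p : ℝ) (φ : Fin n → ℝ),
      HasDerivAt (fun s : ℝ => (T s).mulVec φ) ((T' p).mulVec φ) p)
    (hrel : ∀ (p : ℝ) (φ : Fin n → ℝ),
      (T' p).mulVec φ = (T p).mulVec (P.mulVec φ)) :
    ∀ (φ ψ : Fin n → ℝ) (p₁ p₂ : ℝ),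
      (T p₁).mulVec φ ⬝ᵥ (T p₂).mulVec ψ
        = φ ⬝ᵥ (T (p₂ - p₁)).mulVec ψ ∧
      (T p₁).mulVec φ ⬝ᵥ (T' p₂).mulVec ψ
        = φ ⬝ᵥ (T (p₂ - p₁)).mulVec (P.mulVec ψ) ∧
      (T' p₁).mulVec φ ⬝ᵥ (T' p₂).mulVec ψ
        = P.mulVec φ ⬝ᵥ (T (p₂ - p₁)).mulVec (P.mulVec ψ) := by
  intro φ ψ p₁ p₂
  refine ⟨?_, ?_, ?_⟩
  · rw [key_dot, hgroup]
  · rw [hrel, key_dot, hgroup]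
  · rw [hrel, hrel, key_dot, hgroup]
end
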